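/- arXiv:1903.10237 — 2 statements merged into one kernel-verified Lean document; each statement's English description precedes it below -/
import Mathlib

section
/- For positive naturals α, β, and key k = (k₁,…,k_{α+β-1}) ∈ {0,1}^{α+β-1}, define the β×α Toeplitz matrix T_k over GF(2) with entries (T_k)_{i,j} = k_{β+j-i} (rows indexed i = 1,…,β, columns j = 1,…,α), and the function h_k(x) = T_k · x (mod 2) for x ∈ {0,1}^α viewed as a column vector. Then the family {h_k}_{k∈{0,1}^{α+β-1}} with k uniform is XOR universal₂: for all distinct x, x' ∈ {0,1}^α and all c ∈ {0,1}^β, Pr_{k}[h_k(x) ⊕ h_k(x') = c] = 2^{-β}. -/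
open Finset

/-- The β×α Toeplitz matrix over GF(2) defined by the key `k ∈ {0,1}^{α+β-1}`,
applied to a column vector `x`: `(T_k · x)_i = ∑_j k_{β+j-i} x_j` (1-based indexing). -/
def toeplitzHash (α β : ℕ) (k : Fin (α + β - 1) → ZMod 2) (x : Fin α → ZMod 2) :
    Fin β → ZMod 2 :=
  fun i => ∑ j : Fin α,
    k ⟨β + (j : ℕ) - (i : ℕ) - 1, by
        have hj := j.isLt; have hi := i.isLt; omega⟩ * x j

def uSeq (c d : ℕ → ZMod 2) : ℕ → ZMod 2
  | i => c i - ∑ i' ∈ (Finset.range i).attach, d (i - i'.1) * uSeq c d i'.1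
  termination_by i => i
  decreasing_by exact Finset.mem_range.mp i'.2

lemma uSeq_eq (c d : ℕ → ZMod 2) (i : ℕ) :
    uSeq c d i = c i - ∑ i' ∈ Finset.range i, d (i - i') * uSeq c d i' := by
  rw [uSeq]
  congr 1
  exact Finset.sum_attach (Finset.range i) (fun i' => d (i - i') * uSeq c d i')

lemma toeplitz_surj (α β : ℕ) (hα : 0 < α) (hβ : 0 < β) (Δ : Fin α → ZMod 2)
    (hΔ : Δ ≠ 0) (c : Fin β → ZMod 2) : ∃ k, toeplitzHash α β k Δ = c := by
  have one_of_ne : ∀ a : ZMod 2, a ≠ 0 → a = 1 := by decide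
  have hex : ∃ n, ∃ h : n < α, Δ ⟨n, h⟩ ≠ 0 := by
    by_contra h
    push_neg at h
    apply hΔ
    funext j
    have := h j.1 j.isLt
    simpa using this
  classical
  set j₀ := Nat.find hex with hj₀def
  obtain ⟨hj₀α, hΔj₀⟩ := Nat.find_spec hex
  have hmin : ∀ m < j₀, ∀ h : m < α, Δ ⟨m, h⟩ = 0 := by
    intro m hm h
    have := Nat.find_min hex hm
    push_neg at this
    exact this h
  set d : ℕ → ZMod 2 := fun m => if h : j₀ + m < α then Δ ⟨j₀ + m, h⟩ else 0 with hd
  set cN : ℕ → ZMod 2 := fun i => if h : i < β then c ⟨i, h⟩ else 0 with hcN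
  set u : ℕ → ZMod 2 := uSeq cN d with hu
  set k : Fin (α + β - 1) → ZMod 2 :=
    fun n => if j₀ ≤ (n : ℕ) ∧ (n : ℕ) < β + j₀ then u (β + j₀ - 1 - (n : ℕ)) else 0 with hk
  refine ⟨k, ?_⟩
  funext i
  have hi := i.isLt
  simp only [toeplitzHash]
  set F : ℕ → ZMod 2 := fun j =>
    if h : j < α then
      k ⟨β + j - (i : ℕ) - 1, by omega⟩ * Δ ⟨j, h⟩ else 0 with hF
  have hFval : ∀ (j : ℕ) (hja : j < α),
      F j = k ⟨β + j - (i : ℕ) - 1, by omega⟩ * Δ ⟨j, hja⟩ := by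
    intro j hja
    simp only [hF]
    rw [dif_pos hja]
  have hF0 : ∀ (j : ℕ), ¬ j < α → F j = 0 := by
    intro j hja
    simp only [hF]
    rw [dif_neg hja]
  have hkval : ∀ (m : ℕ) (hm : m < α + β - 1), j₀ ≤ m → m < β + j₀ →
      k ⟨m, hm⟩ = u (β + j₀ - 1 - m) := by
    intro m hm h1 h2
    show (if j₀ ≤ m ∧ m < β + j₀ then u (β + j₀ - 1 - m) else 0) = _
    rw [if_pos ⟨h1, h2⟩]
  have hk0 : ∀ (m : ℕ) (hm : m < α + β - 1), ¬ (j₀ ≤ m ∧ m < β + j₀) →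
      k ⟨m, hm⟩ = 0 := by
    intro m hm h1
    show (if j₀ ≤ m ∧ m < β + j₀ then u (β + j₀ - 1 - m) else 0) = 0
    rw [if_neg h1]
  have s1 : (∑ j : Fin α, k ⟨β + (j : ℕ) - (i : ℕ) - 1, by
      have hj := j.isLt; omega⟩ * Δ j) = ∑ j ∈ Finset.range α, F j := by
    rw [← Fin.sum_univ_eq_sum_range F α]
    refine Finset.sum_congr rfl fun j _ => ?_
    rw [hFval j j.isLt]
  rw [s1]
  have s2 : ∑ j ∈ Finset.range α, F j = ∑ j ∈ Finset.range (α + β + j₀), F j := by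
    apply Finset.sum_subset (Finset.range_subset_range.mpr (show α ≤ α + β + j₀ by omega))
    intro j _ hj
    rw [Finset.mem_range, not_lt] at hj
    exact hF0 j (by omega)
  have s3 : ∑ j ∈ Finset.range (α + β + j₀), F j = ∑ j ∈ Finset.Ico j₀ (j₀ + (i : ℕ) + 1), F j := by
    symm
    apply Finset.sum_subset
    · intro j hj
      rw [Finset.mem_Ico] at hj
      rw [Finset.mem_range]
      omega
    · intro j _ hj
      rw [Finset.mem_Ico, not_and, not_lt] at hj
      by_cases hja : j < α
      · rw [hFval j hja]
        by_cases hjj : j < j₀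
        · rw [hmin j hjj hja, mul_zero]
        · have h1 : j₀ + (i : ℕ) + 1 ≤ j := hj (by omega)
          rw [hk0 (β + j - (i : ℕ) - 1) (by omega) (by omega), zero_mul]
      · exact hF0 j hja
  have s4 : ∑ j ∈ Finset.Ico j₀ (j₀ + (i : ℕ) + 1), F j
      = ∑ m ∈ Finset.range ((i : ℕ) + 1), F (j₀ + m) := by
    rw [Finset.sum_Ico_eq_sum_range,
      show j₀ + (i : ℕ) + 1 - j₀ = (i : ℕ) + 1 from by omega]
  have hdval : ∀ (m : ℕ) (h : j₀ + m < α), d m = Δ ⟨j₀ + m, h⟩ := by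
    intro m h
    simp only [hd]
    rw [dif_pos h]
  have hd0 : ∀ (m : ℕ), ¬ j₀ + m < α → d m = 0 := by
    intro m h
    simp only [hd]
    rw [dif_neg h]
  have s5 : ∀ m ∈ Finset.range ((i : ℕ) + 1), F (j₀ + m) = d m * u ((i : ℕ) - m) := by
    intro m hm
    rw [Finset.mem_range] at hm
    by_cases hma : j₀ + m < α
    · rw [hFval (j₀ + m) hma,
        hkval (β + (j₀ + m) - (i : ℕ) - 1) (by omega) (by omega) (by omega),
        show β + j₀ - 1 - (β + (j₀ + m) - (i : ℕ) - 1) = (i : ℕ) - m from by omega,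
        hdval m hma, mul_comm]
    · rw [hF0 (j₀ + m) hma, hd0 m hma, zero_mul]
  rw [s2, s3, s4, Finset.sum_congr rfl s5, Finset.sum_range_succ']
  have hd0v : d 0 = 1 := by
    apply one_of_ne
    rw [hdval 0 (by omega)]
    simpa using hΔj₀
  have hrefl : ∑ m ∈ Finset.range (i : ℕ), d (m + 1) * u ((i : ℕ) - (m + 1))
      = ∑ i' ∈ Finset.range (i : ℕ), d ((i : ℕ) - i') * u i' := by
    rw [← Finset.sum_range_reflect (fun i' => d ((i : ℕ) - i') * u i') (i : ℕ)]
    refine Finset.sum_congr rfl fun m hm => ?_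
    rw [Finset.mem_range] at hm
    rw [show (i : ℕ) - ((i : ℕ) - 1 - m) = m + 1 from by omega,
      show (i : ℕ) - 1 - m = (i : ℕ) - (m + 1) from by omega]
  rw [Nat.sub_zero, hd0v, one_mul, hrefl]
  have huu := uSeq_eq cN d (i : ℕ)
  rw [← hu] at huu
  rw [show (∑ i' ∈ Finset.range (i : ℕ), d ((i : ℕ) - i') * u i') = cN (i : ℕ) - u (i : ℕ)
    from by rw [huu]; ring]
  have : cN (i : ℕ) = c i := by
    simp only [hcN]
    rw [dif_pos hi]
  rw [this]
  ring

lemma hash_key_add (α β : ℕ) (k k' : Fin (α + β - 1) → ZMod 2) (x : Fin α → ZMod 2) :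
    toeplitzHash α β (k + k') x = toeplitzHash α β k x + toeplitzHash α β k' x := by
  funext i
  simp only [toeplitzHash, Pi.add_apply, add_mul, Finset.sum_add_distrib]

lemma hash_x_add (α β : ℕ) (k : Fin (α + β - 1) → ZMod 2) (x x' : Fin α → ZMod 2) :
    toeplitzHash α β k x + toeplitzHash α β k x' = toeplitzHash α β k (x + x') := by
  funext i
  simp only [toeplitzHash, Pi.add_apply, mul_add, Finset.sum_add_distrib]

/-- The Toeplitz family with a uniform key is XOR universal₂. -/
theorem toeplitz_xu2 (α β : ℕ) (hα : 0 < α) (hβ : 0 < β) :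
    ∀ x x' : Fin α → ZMod 2, x ≠ x' → ∀ c : Fin β → ZMod 2,
      ((univ.filter fun k : Fin (α + β - 1) → ZMod 2 =>
          toeplitzHash α β k x + toeplitzHash α β k x' = c).card : ℝ)
        / Fintype.card (Fin (α + β - 1) → ZMod 2) = 1 / 2 ^ β := by
  intro x x' hxx c
  classical
  set Δ : Fin α → ZMod 2 := x + x' with hΔdef
  have hΔ : Δ ≠ 0 := by
    intro h
    apply hxx
    funext j
    have h1 := congrFun h j
    simp only [hΔdef, Pi.add_apply, Pi.zero_apply] at h1
    have h2 : ∀ a b : ZMod 2, a + b = 0 → a = b := by decide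
    exact h2 _ _ h1
  have addself : ∀ v : Fin β → ZMod 2, v + v = 0 := by
    intro v
    funext j
    have : ∀ a : ZMod 2, a + a = 0 := by decide
    exact this _
  have addselfK : ∀ v : Fin (α + β - 1) → ZMod 2, v + v = 0 := by
    intro v
    funext j
    have : ∀ a : ZMod 2, a + a = 0 := by decide
    exact this _
  have hfilter :
      (univ.filter fun k : Fin (α + β - 1) → ZMod 2 =>
        toeplitzHash α β k x + toeplitzHash α β k x' = c)
      = univ.filter fun k => toeplitzHash α β k Δ = c := by
    apply Finset.filter_congr
    intro k _
    rw [hash_x_add]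
  rw [hfilter]
  have hcard : ∀ c₁ c₂ : Fin β → ZMod 2,
      (univ.filter fun k : Fin (α + β - 1) → ZMod 2 => toeplitzHash α β k Δ = c₁).card
      = (univ.filter fun k => toeplitzHash α β k Δ = c₂).card := by
    intro c₁ c₂
    obtain ⟨k₀, hk₀⟩ := toeplitz_surj α β hα hβ Δ hΔ (c₁ + c₂)
    apply Finset.card_bij' (fun k _ => k + k₀) (fun k _ => k + k₀)
    · intro k hk
      rw [Finset.mem_filter] at hk ⊢
      refine ⟨Finset.mem_univ _, ?_⟩
      rw [hash_key_add, hk.2, hk₀, ← add_assoc, addself, zero_add]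
    · intro k hk
      rw [Finset.mem_filter] at hk ⊢
      refine ⟨Finset.mem_univ _, ?_⟩
      rw [hash_key_add, hk.2, hk₀]
      calc c₂ + (c₁ + c₂) = c₁ + (c₂ + c₂) := by abel
        _ = c₁ := by rw [addself, add_zero]
    · intro k _
      rw [add_assoc, addselfK, add_zero]
    · intro k _
      rw [add_assoc, addselfK, add_zero]
  have hpart : (Finset.univ : Finset (Fin (α + β - 1) → ZMod 2)).card
      = ∑ c' : Fin β → ZMod 2,
        (univ.filter fun k : Fin (α + β - 1) → ZMod 2 => toeplitzHash α β k Δ = c').card :=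
    Finset.card_eq_sum_card_fiberwise (fun k _ => Finset.mem_univ _)
  have hconst : ∑ c' : Fin β → ZMod 2,
      (univ.filter fun k : Fin (α + β - 1) → ZMod 2 => toeplitzHash α β k Δ = c').card
      = Fintype.card (Fin β → ZMod 2)
        * (univ.filter fun k : Fin (α + β - 1) → ZMod 2 => toeplitzHash α β k Δ = c).card := by
    rw [Finset.sum_congr rfl fun c' _ => hcard c' c, Finset.sum_const, Finset.card_univ,
      smul_eq_mul]
  have key : Fintype.card (Fin (α + β - 1) → ZMod 2)
      = Fintype.card (Fin β → ZMod 2)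
        * (univ.filter fun k : Fin (α + β - 1) → ZMod 2 => toeplitzHash α β k Δ = c).card := by
    rw [← Finset.card_univ, hpart, hconst]
  have hcb : Fintype.card (Fin β → ZMod 2) = 2 ^ β := by
    simp [Fintype.card_fun]
  have hD : (0 : ℝ) < Fintype.card (Fin (α + β - 1) → ZMod 2) := by
    have : 0 < Fintype.card (Fin (α + β - 1) → ZMod 2) := Fintype.card_pos
    exact_mod_cast this
  rw [div_eq_div_iff hD.ne' (by positivity)]
  have keyR : (Fintype.card (Fin (α + β - 1) → ZMod 2) : ℝ)
      = 2 ^ β * (univ.filter fun k : Fin (α + β - 1) → ZMod 2 =>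
          toeplitzHash α β k Δ = c).card := by
    rw [key, hcb]
    push_cast
    ring
  rw [keyR]
  ring
end

section
/- Stinson-type counting bound: if H = {h_k : M → T}_{k∈K} is an ε-AXU₂ family with |M| ≥ 2 and the denominator |T|·ε·(|M|-1) + |T| - |M| is positive, then |K| ≥ |M|·(|T|-1) / (|T|·ε·(|M|-1) + |T| - |M|). In particular, for an XU₂ family (ε = 1/|T|) with |M| > |T|, the key space size |K| grows at least linearly in |M|. -/
open Finset

lemma char2_swap' {G : Type*} [AddCommGroup G] (hG : ∀ x : G, x + x = 0)
    (a b c d : G) : a + b = c + d ↔ a + c = b + d := by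
  constructor <;> intro e
  · have h1 : a + c = (a + b) + (c + b) := by
      rw [show (a+b)+(c+b) = (a+c)+(b+b) from by abel, hG, add_zero]
    rw [h1, e, show (c+d)+(c+b) = (b+d)+(c+c) from by abel, hG, add_zero]
  · have h1 : a + b = (a + c) + (b + c) := by
      rw [show (a+c)+(b+c) = (a+b)+(c+c) from by abel, hG, add_zero]
    rw [h1, e, show (b+d)+(b+c) = (c+d)+(b+b) from by abel, hG, add_zero]

lemma collision_lb {M T : Type*} [Fintype M] [Fintype T] [DecidableEq T] (g : M → T) :
    (Fintype.card M : ℝ)^2 ≤ (Fintype.card T : ℝ) *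
      ((univ.filter fun p : M × M => g p.1 = g p.2).card : ℝ) := by
  have hcard : (univ.filter fun p : M × M => g p.1 = g p.2).card
      = ∑ t : T, ((univ.filter fun m : M => g m = t).card)^2 := by
    rw [Finset.card_eq_sum_card_fiberwise
      (f := fun p : M × M => g p.1) (t := univ) (fun p _ => mem_univ _)]
    refine Finset.sum_congr rfl fun t _ => ?_
    have : (univ.filter fun p : M × M => g p.1 = g p.2).filter (fun p => g p.1 = t)
        = (univ.filter fun m : M => g m = t) ×ˢ (univ.filter fun m : M => g m = t) := by
      ext ⟨m, m'⟩
      simp only [mem_filter, mem_product, mem_univ, true_and]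
      constructor
      · rintro ⟨he, ht⟩; exact ⟨ht, he ▸ ht⟩
      · rintro ⟨h1, h2⟩; exact ⟨h1.trans h2.symm, h1⟩
    rw [this, Finset.card_product, sq]
  have hfib : ∑ t : T, ((univ.filter fun m : M => g m = t).card) = Fintype.card M := by
    rw [← Finset.card_eq_sum_card_fiberwise (f := g) (t := univ) (fun m _ => mem_univ _)]
    rfl
  have cs := sq_sum_le_card_mul_sum_sq (s := (univ : Finset T))
    (f := fun t => ((univ.filter fun m : M => g m = t).card : ℝ))
  rw [hcard]
  push_cast
  calc (Fintype.card M : ℝ)^2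
      = (∑ t : T, ((univ.filter fun m : M => g m = t).card : ℝ))^2 := by
        rw [← hfib]; push_cast; ring
    _ ≤ (Fintype.card T : ℝ) * ∑ t : T, ((univ.filter fun m : M => g m = t).card : ℝ)^2 := by
        simpa [card_univ] using cs

lemma sum_ind_prod {T : Type*} [Fintype T] [DecidableEq T] (A B : T) :
    ∑ c : T, (if A = c then (1:ℕ) else 0) * (if B = c then 1 else 0)
      = if A = B then 1 else 0 := by
  simp only [ite_mul, one_mul, zero_mul]
  rw [Finset.sum_ite_eq]
  simp [eq_comm]

lemma swap_identity {M K T : Type*} [Fintype M] [Fintype K] [Fintype T] [DecidableEq T]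
    (A : K → M × M → T) :
    ∑ p : M × M, ∑ c : T, ((univ.filter fun k : K => A k p = c).card)^2
      = ∑ k : K, ∑ k' : K, (univ.filter fun p : M × M => A k p = A k' p).card := by
  have step1 : ∀ p : M × M, ∑ c : T, ((univ.filter fun k : K => A k p = c).card)^2
      = ∑ k : K, ∑ k' : K, if A k p = A k' p then 1 else 0 := by
    intro p
    have : ∀ c : T, ((univ.filter fun k : K => A k p = c).card)^2
        = ∑ k : K, ∑ k' : K, (if A k p = c then 1 else 0) * (if A k' p = c then 1 else 0) := by
      intro c
      rw [sq, Finset.card_filter, Finset.sum_mul_sum]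
    simp_rw [this]
    rw [Finset.sum_comm]
    refine Finset.sum_congr rfl fun k _ => ?_
    rw [Finset.sum_comm]
    refine Finset.sum_congr rfl fun k' _ => ?_
    exact sum_ind_prod _ _
  simp_rw [step1]
  rw [Finset.sum_comm]
  refine Finset.sum_congr rfl fun k _ => ?_
  rw [Finset.sum_comm]
  refine Finset.sum_congr rfl fun k' _ => ?_
  rw [Finset.card_filter]

/-- Stinson-type counting bound for ε-AXU₂ families:
`|K| ≥ |M|(|T|-1)/(|T|ε(|M|-1)+|T|-|M|)` with `|T| = 2^τ`. -/
theorem stinson_bound_axu2 {M K : Type*} [Fintype M] [Fintype K] [Nonempty K] (τ : ℕ)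
    (h : K → M → (Fin τ → ZMod 2)) (ε : ℝ)
    (haxu : ∀ m m' : M, m ≠ m' → ∀ c : Fin τ → ZMod 2,
      ((univ.filter fun k => h k m + h k m' = c).card : ℝ) / Fintype.card K ≤ ε)
    (hM : 2 ≤ Fintype.card M)
    (hden : 0 < (2 : ℝ) ^ τ * ε * ((Fintype.card M : ℝ) - 1)
        + 2 ^ τ - Fintype.card M) :
    (Fintype.card K : ℝ) ≥
      (Fintype.card M : ℝ) * ((2 : ℝ) ^ τ - 1) /
        ((2 : ℝ) ^ τ * ε * ((Fintype.card M : ℝ) - 1) + 2 ^ τ - Fintype.card M) := by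
  classical
  have hT2 : ∀ x : Fin τ → ZMod 2, x + x = 0 := by
    intro x; funext i
    exact CharTwo.add_self_eq_zero (x i)
  have hTcard : (Fintype.card (Fin τ → ZMod 2) : ℝ) = (2:ℝ)^τ := by
    simp [Fintype.card_fun]
  set a : ℝ := (Fintype.card M : ℝ) with ha_def
  set N : ℝ := (Fintype.card K : ℝ) with hN_def
  set b : ℝ := (2:ℝ)^τ with hb_def
  have hN : (0:ℝ) < N := by
    rw [hN_def]
    exact_mod_cast Fintype.card_pos
  have ha : (2:ℝ) ≤ a := by rw [ha_def]; exact_mod_cast hM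
  have hb : (0:ℝ) < b := by rw [hb_def]; positivity
  set A : K → M × M → (Fin τ → ZMod 2) := fun k p => h k p.1 + h k p.2 with hA_def
  set f : M × M → (Fin τ → ZMod 2) → ℕ := fun p c => (univ.filter fun k : K => A k p = c).card
    with hf_def
  -- row sums
  have fsum : ∀ p : M × M, ∑ c : Fin τ → ZMod 2, (f p c : ℝ) = N := by
    intro p
    have h0 : Fintype.card K = ∑ c : Fin τ → ZMod 2, f p c := by
      simpa [hf_def, card_univ] using Finset.card_eq_sum_card_fiberwise
        (f := fun k : K => A k p) (s := (univ : Finset K)) (t := univ) (fun k _ => mem_univ _)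
    rw [hN_def, h0]; push_cast; ring
  -- per-pair bound on counts
  have f_le : ∀ p : M × M, ∀ c : Fin τ → ZMod 2,
      (f p c : ℝ) ≤ (if p.1 = p.2 then N else ε * N) := by
    intro p c
    by_cases hp : p.1 = p.2
    · rw [if_pos hp, hN_def]
      exact_mod_cast Finset.card_filter_le _ _
    · rw [if_neg hp]
      have h1 := haxu p.1 p.2 hp c
      rw [div_le_iff₀ hN] at h1
      exact h1
  -- Upper bound on Q
  have upper : (∑ p : M × M, ∑ c : Fin τ → ZMod 2, ((f p c : ℝ))^2)
      ≤ (a * N + (a*a - a) * (ε * N)) * N := by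
    have perp : ∀ p : M × M, ∑ c : Fin τ → ZMod 2, ((f p c : ℝ))^2
        ≤ (if p.1 = p.2 then N else ε * N) * N := by
      intro p
      calc ∑ c : Fin τ → ZMod 2, ((f p c : ℝ))^2
          ≤ ∑ c : Fin τ → ZMod 2, (if p.1 = p.2 then N else ε * N) * (f p c : ℝ) := by
            refine Finset.sum_le_sum fun c _ => ?_
            rw [sq]
            exact mul_le_mul_of_nonneg_right (f_le p c) (by positivity)
        _ = (if p.1 = p.2 then N else ε * N) * ∑ c : Fin τ → ZMod 2, (f p c : ℝ) := by
            rw [Finset.mul_sum]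
        _ = (if p.1 = p.2 then N else ε * N) * N := by rw [fsum p]
    have cardD : ((univ.filter fun p : M × M => p.1 = p.2).card : ℝ) = a := by
      have h1 : (univ.filter fun p : M × M => p.1 = p.2) = (univ : Finset M).diag := by
        ext ⟨x, y⟩
        simp [Finset.mem_diag]
      rw [h1, Finset.diag_card, card_univ, ha_def]
    have cardND : ((univ.filter fun p : M × M => ¬ p.1 = p.2).card : ℝ) = a*a - a := by
      have hsplit := Finset.card_filter_add_card_filter_not
        (s := (univ : Finset (M × M))) (p := fun p : M × M => p.1 = p.2)
      have huniv : ((univ : Finset (M × M)).card : ℝ) = a * a := by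
        rw [card_univ, ha_def]
        push_cast [Fintype.card_prod]
        ring
      have h2 : ((univ.filter fun p : M × M => p.1 = p.2).card : ℝ)
          + ((univ.filter fun p : M × M => ¬ p.1 = p.2).card : ℝ)
          = ((univ : Finset (M × M)).card : ℝ) := by exact_mod_cast hsplit
      rw [cardD, huniv] at h2
      linarith
    calc ∑ p : M × M, ∑ c : Fin τ → ZMod 2, ((f p c : ℝ))^2
        ≤ ∑ p : M × M, (if p.1 = p.2 then N else ε * N) * N :=
          Finset.sum_le_sum fun p _ => perp p
      _ = (∑ p : M × M, (if p.1 = p.2 then N else ε * N)) * N := by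
          rw [Finset.sum_mul]
      _ = (a * N + (a*a - a) * (ε * N)) * N := by
          rw [Finset.sum_ite, Finset.sum_const, Finset.sum_const,
            nsmul_eq_mul, nsmul_eq_mul, cardD, cardND]
  -- Lower bound on Q
  have lower : N * ((a*a/b) * (N - 1) + a*a)
      ≤ ∑ p : M × M, ∑ c : Fin τ → ZMod 2, ((f p c : ℝ))^2 := by
    have hswap : (∑ p : M × M, ∑ c : Fin τ → ZMod 2, (f p c)^2 : ℕ)
        = ∑ k : K, ∑ k' : K, (univ.filter fun p : M × M => A k p = A k' p).card :=
      swap_identity A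
    have hswapR : (∑ p : M × M, ∑ c : Fin τ → ZMod 2, ((f p c : ℝ))^2)
        = ∑ k : K, ∑ k' : K, ((univ.filter fun p : M × M => A k p = A k' p).card : ℝ) := by
      exact_mod_cast congrArg (fun n : ℕ => (n : ℝ)) hswap
    rw [hswapR]
    have perkk : ∀ k k' : K,
        (if k = k' then a*a else a*a/b)
          ≤ ((univ.filter fun p : M × M => A k p = A k' p).card : ℝ) := by
      intro k k'
      by_cases hkk : k = k'
      · subst hkk
        rw [if_pos rfl]
        have h1 : (univ.filter fun p : M × M => A k p = A k p) = (univ : Finset (M × M)) :=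
          Finset.filter_true_of_mem (fun _ _ => rfl)
        rw [h1, card_univ]
        refine le_of_eq ?_
        rw [ha_def, Fintype.card_prod]
        push_cast
        ring
      · rw [if_neg hkk]
        have hfe : (univ.filter fun p : M × M => A k p = A k' p)
            = (univ.filter fun p : M × M =>
                (fun m => h k m + h k' m) p.1 = (fun m => h k m + h k' m) p.2) := by
          refine Finset.filter_congr fun p _ => ?_
          simpa using char2_swap' hT2 (h k p.1) (h k p.2) (h k' p.1) (h k' p.2)
        rw [hfe]
        have hcs := collision_lb (fun m : M => h k m + h k' m)
        rw [hTcard] at hcs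
        rw [div_le_iff₀ hb]
        nlinarith [hcs]
    calc N * ((a*a/b) * (N - 1) + a*a)
        = ∑ k : K, ((a*a/b) * (N - 1) + a*a) := by
          rw [Finset.sum_const, card_univ, nsmul_eq_mul, hN_def]
      _ ≤ ∑ k : K, ∑ k' : K, ((univ.filter fun p : M × M => A k p = A k' p).card : ℝ) := by
          refine Finset.sum_le_sum fun k _ => ?_
          have inner_eq : ∑ k' : K, (if k = k' then a*a else a*a/b)
              = (a*a/b) * (N - 1) + a*a := by
            have h1 : ∀ k' : K, (if k = k' then a*a else a*a/b)
                = a*a/b + (if k = k' then a*a - a*a/b else 0) := by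
              intro k'; by_cases hkk : k = k'
              · rw [if_pos hkk, if_pos hkk]; ring
              · rw [if_neg hkk, if_neg hkk]; ring
            simp_rw [h1]
            rw [Finset.sum_add_distrib, Finset.sum_const, card_univ, nsmul_eq_mul,
              Finset.sum_ite_eq, if_pos (mem_univ k), ← hN_def]
            ring
          rw [← inner_eq]
          exact Finset.sum_le_sum fun k' _ => perkk k k'
  -- combine
  have hfinal : N * ((a*a/b) * (N - 1) + a*a) ≤ (a * N + (a*a - a) * (ε * N)) * N :=
    le_trans lower upper
  rw [ge_iff_le, div_le_iff₀ hden]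
  have hbne : b ≠ 0 := ne_of_gt hb
  have P1 : N*(a*a*(N-1) + a*a*b) ≤ (a*N + (a*a-a)*(ε*N))*N*b := by
    have hm := mul_le_mul_of_nonneg_right hfinal hb.le
    have e1 : (N * ((a*a/b) * (N - 1) + a*a)) * b = N*(a*a*(N-1) + a*a*b) := by
      field_simp
      try ring
    rw [e1] at hm
    exact hm
  have hNa : (0:ℝ) < N * a := by nlinarith
  have h2 : a*(N-1) + a*b ≤ N*b + (a-1)*ε*N*b := by
    have h3 : N*a*(a*(N-1) + a*b) ≤ N*a*(N*b + (a-1)*ε*N*b) := by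
      calc N*a*(a*(N-1) + a*b) = N*(a*a*(N-1) + a*a*b) := by ring
        _ ≤ (a*N + (a*a-a)*(ε*N))*N*b := P1
        _ = N*a*(N*b + (a-1)*ε*N*b) := by ring
    exact le_of_mul_le_mul_left h3 hNa
  nlinarith [h2]
end
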